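/- There exist constants 0 < c₁ ≤ c₂ such that for all t > 0 and x > y, c₁ (x-y)t/(√t + x - y) ≤ σ_{t}⁴ - μ_{t,x,y}² ≤ c₂ (x-y)t/(√t + x - y), where σ_t² = √(t/π) and μ_{t,x,y} = (1/(2√π)) ∫₀^t r^{-1/2} exp(-(x-y)²/(4r)) dr. -/

import Mathlib

/-!
With `z = x - y`, write `J = ∫₀^t r^{-1/2} e^{-z²/(4r)} dr` and `D = 2√t - J`, the integral of
`r^{-1/2} (1 - e^{-z²/(4r)})`. Then `σ_t⁴ - μ² = (4√t - D) D / (4π)` with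
`2√t ≤ 4√t - D ≤ 4√t`, so everything reduces to `D ≍ min(√t, z)`, and
`min(√t, z) ≍ z√t/(√t + z)`. For the lower bound, on `r ≤ min(t, z²)` the factor
`1 - e^{-z²/(4r)}` is at least `1 - e^{-1/4}`. For the upper bound,
`1 - e^{-z²/(4r)} ≤ min(1, z²/(4r))`, and `∫_{z²}^∞ r^{-3/2} dr = 2/z`.
-/

open MeasureTheory Real

/-- `μ_{t,x,y} = E[u(t,x)u(t,y)] = (1/(2√π)) ∫₀^t r^{-1/2} exp(-(x-y)²/(4r)) dr`. -/
noncomputable def muCov (t x y : ℝ) : ℝ :=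
  (2 * Real.sqrt π)⁻¹ *
    ∫ r in Set.Ioc (0 : ℝ) t, (Real.sqrt r)⁻¹ * Real.exp (-(x - y) ^ 2 / (4 * r))

open Set

lemma inv_sqrt_eq_rpow_neg_half {r : ℝ} (hr : 0 ≤ r) : (√r)⁻¹ = r ^ (-(1 / 2) : ℝ) := by
  rw [rpow_neg hr, sqrt_eq_rpow]

lemma integrableOn_inv_sqrt_Ioc {a : ℝ} (ha : 0 ≤ a) :
    IntegrableOn (fun r : ℝ => (√r)⁻¹) (Ioc 0 a) :=
  ((intervalIntegrable_iff_integrableOn_Ioc_of_le ha).1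
    (intervalIntegral.intervalIntegrable_rpow' (r := -(1 / 2)) (by norm_num))).congr_fun
    (fun _ hr => (inv_sqrt_eq_rpow_neg_half hr.1.le).symm) measurableSet_Ioc

lemma integral_inv_sqrt_Ioc {a : ℝ} (ha : 0 ≤ a) :
    ∫ r in Ioc 0 a, (√r)⁻¹ = 2 * √a := by
  rw [setIntegral_congr_fun measurableSet_Ioc (fun r hr => inv_sqrt_eq_rpow_neg_half hr.1.le),
    ← intervalIntegral.integral_of_le ha, integral_rpow (Or.inl (by norm_num)),
    zero_rpow (by norm_num), sqrt_eq_rpow]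
  norm_num
  ring

lemma integral_inv_sqrt_mul_inv_Ioc {a b : ℝ} (ha : 0 < a) (hab : a ≤ b) :
    ∫ r in Ioc a b, (√r)⁻¹ * r⁻¹ = 2 * ((√a)⁻¹ - (√b)⁻¹) := by
  have hpow : ∀ r ∈ Ioc a b, (√r)⁻¹ * r⁻¹ = r ^ (-(3 / 2) : ℝ) := fun r hr => by
    have hr0 : 0 < r := ha.trans hr.1
    rw [inv_sqrt_eq_rpow_neg_half hr0.le, ← rpow_neg_one, ← rpow_add hr0]
    norm_num
  rw [setIntegral_congr_fun measurableSet_Ioc hpow, ← intervalIntegral.integral_of_le hab,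
    integral_rpow (Or.inr ⟨by norm_num, fun h => by
      rw [uIcc_of_le hab] at h; exact absurd h.1 (not_le.2 ha)⟩),
    inv_sqrt_eq_rpow_neg_half ha.le, inv_sqrt_eq_rpow_neg_half (ha.le.trans hab)]
  norm_num
  ring

lemma integrableOn_inv_sqrt_mul_inv_Ioc {a b : ℝ} (ha : 0 < a) :
    IntegrableOn (fun r : ℝ => (√r)⁻¹ * r⁻¹) (Ioc a b) :=
  (ContinuousOn.integrableOn_Icc
    ((continuous_sqrt.continuousOn.inv₀ fun _ hr => sqrt_ne_zero'.2 (ha.trans_le hr.1)).mul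
      (continuousOn_id.inv₀ fun _ hr => (ha.trans_le hr.1).ne'))).mono_set Ioc_subset_Icc_self

section Deficit

variable {t z r : ℝ}

lemma exp_neg_sq_div_le_one (hr : 0 ≤ r) : exp (-z ^ 2 / (4 * r)) ≤ 1 :=
  exp_le_one_iff.2 (div_nonpos_of_nonpos_of_nonneg (neg_nonpos.2 (sq_nonneg z)) (by positivity))

lemma one_sub_exp_neg_sq_div_le : 1 - exp (-z ^ 2 / (4 * r)) ≤ z ^ 2 / (4 * r) := by
  have := one_sub_le_exp_neg (z ^ 2 / (4 * r))
  rw [neg_div]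
  linarith

lemma one_sub_exp_neg_quarter_le (hr : 0 < r) (hrz : r ≤ z ^ 2) :
    1 - exp (-(1 / 4)) ≤ 1 - exp (-z ^ 2 / (4 * r)) := by
  have : -z ^ 2 / (4 * r) ≤ -(1 / 4) := by
    rw [div_le_iff₀ (by positivity)]
    linarith
  linarith [exp_le_exp.2 this]

lemma integrableOn_inv_sqrt_mul_exp_Ioc (ht : 0 ≤ t) :
    IntegrableOn (fun r : ℝ => (√r)⁻¹ * exp (-z ^ 2 / (4 * r))) (Ioc 0 t) := by
  refine Integrable.mono' (integrableOn_inv_sqrt_Ioc ht) (by fun_prop) ?_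
  refine (ae_restrict_iff' measurableSet_Ioc).2 (Filter.Eventually.of_forall fun r hr => ?_)
  rw [norm_of_nonneg (by positivity)]
  exact mul_le_of_le_one_right (by positivity) (exp_neg_sq_div_le_one hr.1.le)

/-- For `z = x - y` this is `2√π (σ_t² - μ_{t,x,y})`, see `muCov_eq_covDeficit`. -/
noncomputable def covDeficit (t z : ℝ) : ℝ :=
  ∫ r in Ioc 0 t, (√r)⁻¹ * (1 - exp (-z ^ 2 / (4 * r)))

lemma integrableOn_covDeficit_integrand (ht : 0 ≤ t) :
    IntegrableOn (fun r : ℝ => (√r)⁻¹ * (1 - exp (-z ^ 2 / (4 * r)))) (Ioc 0 t) := by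
  simpa only [mul_sub, mul_one, Pi.sub_def] using
    (integrableOn_inv_sqrt_Ioc ht).sub (integrableOn_inv_sqrt_mul_exp_Ioc (z := z) ht)

lemma covDeficit_integrand_nonneg (hr : 0 ≤ r) :
    0 ≤ (√r)⁻¹ * (1 - exp (-z ^ 2 / (4 * r))) :=
  mul_nonneg (by positivity) (sub_nonneg.2 (exp_neg_sq_div_le_one hr))

lemma covDeficit_integrand_le :
    (√r)⁻¹ * (1 - exp (-z ^ 2 / (4 * r))) ≤ (√r)⁻¹ :=
  mul_le_of_le_one_right (by positivity) (by linarith [exp_pos (-z ^ 2 / (4 * r))])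

lemma muCov_eq_covDeficit (ht : 0 ≤ t) (x y : ℝ) :
    muCov t x y = (2 * √π)⁻¹ * (2 * √t - covDeficit t (x - y)) := by
  rw [muCov, covDeficit, ← integral_inv_sqrt_Ioc ht,
    ← integral_sub (integrableOn_inv_sqrt_Ioc ht) (integrableOn_covDeficit_integrand ht)]
  congr 2 with r
  ring

lemma sqrt_div_pi_sq_sub_muCov_sq (ht : 0 ≤ t) (x y : ℝ) :
    √(t / π) ^ 2 - muCov t x y ^ 2 =
      covDeficit t (x - y) * (4 * √t - covDeficit t (x - y)) / (4 * π) := by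
  rw [sq_sqrt (div_nonneg ht pi_pos.le), muCov_eq_covDeficit ht]
  have hπ : √π ^ 2 = π := sq_sqrt pi_pos.le
  have ht' : √t ^ 2 = t := sq_sqrt ht
  field_simp
  rw [hπ]
  linear_combination (-16 * π) * ht'

lemma covDeficit_nonneg : 0 ≤ covDeficit t z :=
  setIntegral_nonneg measurableSet_Ioc fun _ hr => covDeficit_integrand_nonneg hr.1.le

lemma covDeficit_le_two_mul_sqrt (ht : 0 ≤ t) : covDeficit t z ≤ 2 * √t := by
  rw [← integral_inv_sqrt_Ioc ht]
  exact setIntegral_mono_on (integrableOn_covDeficit_integrand ht) (integrableOn_inv_sqrt_Ioc ht)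
    measurableSet_Ioc fun _ _ => covDeficit_integrand_le

lemma covDeficit_mono {s : ℝ} (hs : 0 ≤ s) (hst : s ≤ t) :
    covDeficit s z ≤ covDeficit t z :=
  setIntegral_mono_set (integrableOn_covDeficit_integrand (hs.trans hst))
    ((ae_restrict_iff' measurableSet_Ioc).2
      (Filter.Eventually.of_forall fun _ hr => covDeficit_integrand_nonneg hr.1.le))
    (Ioc_subset_Ioc_right hst).eventuallyLE

lemma two_mul_min_le_covDeficit (ht : 0 ≤ t) (hz : 0 ≤ z) :
    (1 - exp (-(1 / 4))) * (2 * min √t z) ≤ covDeficit t z := by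
  set m := min √t z ^ 2
  have hm : 0 ≤ m := sq_nonneg _
  have hmt : m ≤ t := by
    simpa only [sq_sqrt ht] using pow_le_pow_left₀ (le_min (sqrt_nonneg t) hz) (min_le_left √t z) 2
  have hmz : m ≤ z ^ 2 := pow_le_pow_left₀ (le_min (sqrt_nonneg t) hz) (min_le_right √t z) 2
  calc (1 - exp (-(1 / 4))) * (2 * min √t z)
      = (1 - exp (-(1 / 4))) * ∫ r in Ioc 0 m, (√r)⁻¹ := by
        rw [integral_inv_sqrt_Ioc hm, sqrt_sq (le_min (sqrt_nonneg t) hz)]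
    _ = ∫ r in Ioc 0 m, (√r)⁻¹ * (1 - exp (-(1 / 4))) := by
        rw [integral_mul_const, mul_comm]
    _ ≤ covDeficit m z :=
        setIntegral_mono_on ((integrableOn_inv_sqrt_Ioc hm).mul_const _)
          (integrableOn_covDeficit_integrand hm) measurableSet_Ioc fun r hr =>
          mul_le_mul_of_nonneg_left (one_sub_exp_neg_quarter_le hr.1 (hr.2.trans hmz))
            (by positivity)
    _ ≤ covDeficit t z := covDeficit_mono hm hmt

lemma integral_Ioc_sq_covDeficit_integrand_le (hz : 0 < z) (hzt : z ^ 2 ≤ t) :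
    ∫ r in Ioc (z ^ 2) t, (√r)⁻¹ * (1 - exp (-z ^ 2 / (4 * r))) ≤ z / 2 := by
  have hz2 : 0 < z ^ 2 := by positivity
  calc ∫ r in Ioc (z ^ 2) t, (√r)⁻¹ * (1 - exp (-z ^ 2 / (4 * r)))
      ≤ ∫ r in Ioc (z ^ 2) t, z ^ 2 / 4 * ((√r)⁻¹ * r⁻¹) := by
        refine setIntegral_mono_on ((integrableOn_covDeficit_integrand (hz2.le.trans hzt)).mono_set
          (Ioc_subset_Ioc_left hz2.le)) ((integrableOn_inv_sqrt_mul_inv_Ioc hz2).const_mul _)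
          measurableSet_Ioc fun r _ => ?_
        calc (√r)⁻¹ * (1 - exp (-z ^ 2 / (4 * r))) ≤ (√r)⁻¹ * (z ^ 2 / (4 * r)) :=
              mul_le_mul_of_nonneg_left one_sub_exp_neg_sq_div_le (by positivity)
          _ = z ^ 2 / 4 * ((√r)⁻¹ * r⁻¹) := by ring
    _ = z / 2 - z ^ 2 / 2 * (√t)⁻¹ := by
        rw [integral_const_mul, integral_inv_sqrt_mul_inv_Ioc hz2 hzt, sqrt_sq hz.le]
        field_simp
        ring
    _ ≤ z / 2 := by
        have : 0 ≤ z ^ 2 / 2 * (√t)⁻¹ := by positivity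
        linarith

lemma covDeficit_le_of_sq_le (hz : 0 < z) (hzt : z ^ 2 ≤ t) : covDeficit t z ≤ 5 / 2 * z := by
  have hz2 : 0 < z ^ 2 := by positivity
  have hsplit : covDeficit t z = covDeficit (z ^ 2) z +
      ∫ r in Ioc (z ^ 2) t, (√r)⁻¹ * (1 - exp (-z ^ 2 / (4 * r))) := by
    rw [covDeficit, covDeficit, ← Ioc_union_Ioc_eq_Ioc hz2.le hzt]
    exact setIntegral_union (Ioc_disjoint_Ioc_of_le le_rfl) measurableSet_Ioc
      (integrableOn_covDeficit_integrand hz2.le)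
      ((integrableOn_covDeficit_integrand (hz2.le.trans hzt)).mono_set
        (Ioc_subset_Ioc_left hz2.le))
  have hnear : covDeficit (z ^ 2) z ≤ 2 * z := by
    simpa only [sqrt_sq hz.le] using covDeficit_le_two_mul_sqrt (z := z) hz2.le
  linarith [integral_Ioc_sq_covDeficit_integrand_le hz hzt]

lemma covDeficit_le_min (ht : 0 ≤ t) (hz : 0 < z) : covDeficit t z ≤ 5 / 2 * min √t z := by
  rcases le_total √t z with h | h
  · rw [min_eq_left h]
    linarith [covDeficit_le_two_mul_sqrt (z := z) ht, sqrt_nonneg t]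
  · rw [min_eq_right h]
    exact covDeficit_le_of_sq_le hz (by simpa only [sq_sqrt ht] using pow_le_pow_left₀ hz.le h 2)

end Deficit

lemma mul_div_add_le_min {a b : ℝ} (ha : 0 < a) (hb : 0 < b) : a * b / (a + b) ≤ min a b := by
  rw [div_le_iff₀ (by positivity)]
  rcases le_total a b with h | h
  · rw [min_eq_left h]; nlinarith
  · rw [min_eq_right h]; nlinarith

lemma min_le_two_mul_mul_div_add {a b : ℝ} (ha : 0 < a) (hb : 0 < b) :
    min a b ≤ 2 * (a * b / (a + b)) := by
  rw [mul_div_assoc', le_div_iff₀ (by positivity)]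
  rcases le_total a b with h | h
  · rw [min_eq_left h]; nlinarith
  · rw [min_eq_right h]; nlinarith

lemma covDeficit_mul_comparable {t z : ℝ} (ht : 0 < t) (hz : 0 < z) :
    4 * (1 - exp (-(1 / 4))) * (z * t / (√t + z)) ≤
        covDeficit t z * (4 * √t - covDeficit t z) ∧
      covDeficit t z * (4 * √t - covDeficit t z) ≤ 20 * (z * t / (√t + z)) := by
  have hst : 0 < √t := sqrt_pos.2 ht
  have hh : z * t / (√t + z) = √t * (√t * z / (√t + z)) := by
    rw [mul_div_assoc', ← mul_assoc, mul_self_sqrt ht.le, mul_comm]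
  have hmin₁ := mul_div_add_le_min hst hz
  have hmin₂ := min_le_two_mul_mul_div_add hst hz
  have hD₀ := covDeficit_nonneg (t := t) (z := z)
  have hD₁ := two_mul_min_le_covDeficit ht.le hz.le
  have hD₂ := covDeficit_le_min ht.le hz
  have hD₃ := covDeficit_le_two_mul_sqrt (z := z) ht.le
  have hc : 0 < 1 - exp (-(1 / 4)) := sub_pos.2 (exp_lt_one_iff.2 (by norm_num))
  rw [hh]
  constructor
  · calc 4 * (1 - exp (-(1 / 4))) * (√t * (√t * z / (√t + z)))
        = (1 - exp (-(1 / 4))) * (2 * (√t * z / (√t + z))) * (2 * √t) := by ring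
      _ ≤ covDeficit t z * (4 * √t - covDeficit t z) := by
        gcongr
        · exact le_trans (by gcongr) hD₁
        · linarith
  · calc covDeficit t z * (4 * √t - covDeficit t z)
        ≤ 5 / 2 * (2 * (√t * z / (√t + z))) * (4 * √t) := by
          gcongr
          · linarith
          · exact hD₂.trans (by gcongr)
          · linarith
      _ = 20 * (√t * (√t * z / (√t + z))) := by ring

/-- There exist `0 < c₁ ≤ c₂` with
`c₁(x-y)t/(√t+x-y) ≤ σ_t⁴ - μ_{t,x,y}² ≤ c₂(x-y)t/(√t+x-y)` for all `t > 0`, `x > y`,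
where `σ_t² = √(t/π)`. -/
theorem stmt_13 :
    ∃ c₁ c₂ : ℝ, 0 < c₁ ∧ c₁ ≤ c₂ ∧ ∀ t x y : ℝ, 0 < t → y < x →
      c₁ * ((x - y) * t / (Real.sqrt t + (x - y))) ≤
          Real.sqrt (t / π) ^ 2 - muCov t x y ^ 2 ∧
        Real.sqrt (t / π) ^ 2 - muCov t x y ^ 2 ≤
          c₂ * ((x - y) * t / (Real.sqrt t + (x - y))) := by
  refine ⟨(1 - exp (-(1 / 4))) / π, 5 / π,
    div_pos (sub_pos.2 (exp_lt_one_iff.2 (by norm_num))) pi_pos, ?_, fun t x y ht hxy => ?_⟩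
  · gcongr
    linarith [exp_pos (-(1 / 4))]
  obtain ⟨hlower, hupper⟩ := covDeficit_mul_comparable ht (sub_pos.2 hxy)
  rw [sqrt_div_pi_sq_sub_muCov_sq ht.le]
  constructor
  · calc (1 - exp (-(1 / 4))) / π * ((x - y) * t / (√t + (x - y)))
        = 4 * (1 - exp (-(1 / 4))) * ((x - y) * t / (√t + (x - y))) / (4 * π) := by
          field_simp
      _ ≤ _ := by gcongr
  · calc _ ≤ 20 * ((x - y) * t / (√t + (x - y))) / (4 * π) := by gcongr
      _ = 5 / π * ((x - y) * t / (√t + (x - y))) := by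
        field_simp
        ring
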